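/- arXiv:2408.02388 — 3 statements merged into one kernel-verified Lean document; each statement's English description precedes it below -/
import Mathlib

section
/- Let C be a hereditary class of finite simple graphs, closed under isomorphism, that is well-quasi-ordered by the induced-subgraph (embedding) relation, i.e., there is no infinite family of members of C that pairwise do not embed into one another. Then C has the extension preservation property: every first-order sentence in the language of graphs that is preserved by embeddings over C is equivalent over C to an existential sentence. -/
open FirstOrder Language

/-- Satisfaction of a first-order sentence in the language of graphs by a simple graph. -/
def GSat {V : Type} (G : SimpleGraph V) (φ : Language.graph.Sentence) : Prop :=
  @Sentence.Realize Language.graph V G.structure φ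

/-- A sentence is existential if it has the form `∃ x₁ … xₙ θ` with `θ` quantifier-free. -/
def IsExistentialSentence {L : Language} (ψ : L.Sentence) : Prop :=
  ∃ (n : ℕ) (θ : L.BoundedFormula Empty n), θ.IsQF ∧ ψ = θ.exs

/-!
A model of `φ` in `C` is minimal if no model of `φ` in `C` with fewer vertices embeds into it.
Every model of `φ` in `C` contains a minimal one, and minimal models of different sizes are
pairwise non-embeddable, so by well-quasi-ordering their sizes are bounded by some `N`. Then `φ` is
equivalent over `C` to the existential sentence "some model of `φ` in `C` with at most `N`
vertices embeds": one direction by descent to a minimal model, the other by preservation of `φ`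
under embeddings.
-/

namespace FirstOrder.Language.BoundedFormula

variable {L : Language} {α β : Type*} {n : ℕ}

theorem IsQF.iff {φ ψ : L.BoundedFormula α n} (hφ : φ.IsQF) (hψ : ψ.IsQF) :
    (φ.iff ψ).IsQF :=
  (hφ.imp hψ).inf (hψ.imp hφ)

theorem IsQF.iInf [Finite β] {f : β → L.BoundedFormula α n} (hf : ∀ b, (f b).IsQF) :
    (iInf f).IsQF := by
  let := Fintype.ofFinite β
  suffices ∀ l : List β, ((l.map f).foldr (· ⊓ ·) ⊤).IsQF from this _
  intro l
  induction l with
  | nil => exact IsQF.top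
  | cons b l ih => exact (hf b).inf ih

theorem IsQF.iSup [Finite β] {f : β → L.BoundedFormula α n} (hf : ∀ b, (f b).IsQF) :
    (iSup f).IsQF := by
  let := Fintype.ofFinite β
  suffices ∀ l : List β, ((l.map f).foldr (· ⊔ ·) ⊥).IsQF from this _
  intro l
  induction l with
  | nil => exact isQF_bot
  | cons b l ih => exact (hf b).sup ih

end FirstOrder.Language.BoundedFormula

open BoundedFormula

namespace SimpleGraph

variable {V W : Type} {H : SimpleGraph W}

noncomputable def Iso.toLanguageEquiv {G : SimpleGraph V} (e : G ≃g H) :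
    @Language.Equiv Language.graph V W G.structure H.structure :=
  letI := G.structure
  letI := H.structure
  { toEquiv := e.toEquiv
    map_fun' := fun f => isEmptyElim f
    map_rel' := fun | .adj, _ => e.map_adj_iff }

theorem Iso.gSat_iff {G : SimpleGraph V} (e : G ≃g H) (φ : Language.graph.Sentence) :
    GSat G φ ↔ GSat H φ :=
  letI := G.structure
  letI := H.structure
  StrongHomClass.realize_sentence e.toLanguageEquiv φ

theorem gSat_top (G : SimpleGraph V) : GSat G ⊤ :=
  letI := G.structure
  BoundedFormula.realize_top.2 trivial

section Diagram

variable {β α : Type} {n : ℕ} [Finite β]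

open Classical in
noncomputable def diagram (G : SimpleGraph β) (t : β → Language.graph.Term (α ⊕ Fin n)) :
    Language.graph.BoundedFormula α n :=
  BoundedFormula.iInf fun p : β × β =>
    ((t p.1).bdEqual (t p.2)).iff (if p.1 = p.2 then ⊤ else ⊥) ⊓
      (adj.boundedFormula₂ (t p.1) (t p.2)).iff (if G.Adj p.1 p.2 then ⊤ else ⊥)

theorem isQF_diagram (G : SimpleGraph β) (t : β → Language.graph.Term (α ⊕ Fin n)) :
    (diagram G t).IsQF := by
  refine IsQF.iInf fun p => .inf (.iff ?_ ?_) (.iff ?_ ?_)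
  all_goals first
    | exact (IsAtomic.equal _ _).isQF
    | exact (IsAtomic.rel _ _).isQF
    | split_ifs
      exacts [.top, isQF_bot]

theorem realize_diagram (G : SimpleGraph β) (t : β → Language.graph.Term (α ⊕ Fin n))
    (v : α → W) (xs : Fin n → W) :
    @BoundedFormula.Realize _ W H.structure _ _ (diagram G t) v xs ↔
      ∃ f : G ↪g H, ⇑f = fun b => @Term.realize _ W H.structure _ (Sum.elim v xs) (t b) := by
  let := H.structure
  set x := fun b => (t b).realize (Sum.elim v xs)
  have hx : (diagram G t).Realize v xs ↔
      ∀ i j, (x i = x j ↔ i = j) ∧ (H.Adj (x i) (x j) ↔ G.Adj i j) := by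
    simp only [diagram, realize_iInf, realize_inf, realize_iff, realize_bdEqual,
      realize_rel₂, apply_ite (BoundedFormula.Realize · v xs), realize_top, realize_bot,
      if_false_right, and_true, Prod.forall]
    rfl
  rw [hx]
  constructor
  · intro h
    exact ⟨⟨⟨x, fun i j hij => (h i j).1.1 hij⟩, (h _ _).2⟩, rfl⟩
  · rintro ⟨f, hf⟩ i j
    rw [← hf]
    exact ⟨f.injective.eq_iff, f.map_adj_iff⟩

end Diagram

section EmbedsSome

variable {N : ℕ} {P : (Σ n : Fin (N + 1), SimpleGraph (Fin n)) → Prop}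

/-- Each graph `p.2` is looked for on the first `p.1` of `N` existentially quantified variables. -/
noncomputable def embedsSomeSentence (N : ℕ)
    (P : (Σ n : Fin (N + 1), SimpleGraph (Fin n)) → Prop) : Language.graph.Sentence :=
  (BoundedFormula.iSup fun p : {p // P p} =>
    diagram p.1.2 fun i => Term.var (Sum.inr (Fin.castLE p.1.1.is_le i))).exs

theorem isExistentialSentence_embedsSomeSentence :
    IsExistentialSentence (embedsSomeSentence N P) :=
  ⟨N, _, IsQF.iSup fun _ => isQF_diagram _ _, rfl⟩

theorem gSat_embedsSomeSentence_iff :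
    GSat H (embedsSomeSentence N P) ↔
      ∃ xs : Fin N → W, ∃ p : {p // P p}, ∃ f : p.1.2 ↪g H,
        ⇑f = xs ∘ Fin.castLE p.1.1.is_le := by
  let := H.structure
  simp only [GSat, Sentence.Realize, embedsSomeSentence, realize_exs, realize_iSup,
    realize_diagram, Term.realize_var, Sum.elim_inr]
  rfl

theorem exists_embedding_of_gSat_embedsSomeSentence (h : GSat H (embedsSomeSentence N P)) :
    ∃ p, P p ∧ Nonempty (p.2 ↪g H) :=
  let ⟨_, ⟨p, hp⟩, f, _⟩ := gSat_embedsSomeSentence_iff.1 h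
  ⟨p, hp, ⟨f⟩⟩

theorem gSat_embedsSomeSentence [Nonempty W] {p : Σ n : Fin (N + 1), SimpleGraph (Fin n)}
    (hp : P p) (f : p.2 ↪g H) : GSat H (embedsSomeSentence N P) :=
  gSat_embedsSomeSentence_iff.2
    ⟨Function.extend (Fin.castLE p.1.is_le) f fun _ => Classical.arbitrary W, ⟨p, hp⟩, f,
    funext fun i => ((Fin.castLE_injective _).extend_apply f _ i).symm⟩

end EmbedsSome

end SimpleGraph

section MinimalModels

variable (C : ∀ V : Type, SimpleGraph V → Prop) (φ : Language.graph.Sentence)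

def IsModelIn {n : ℕ} (G : SimpleGraph (Fin n)) : Prop :=
  C (Fin n) G ∧ GSat G φ

def IsMinimalModel {n : ℕ} (G : SimpleGraph (Fin n)) : Prop :=
  IsModelIn C φ G ∧
    ∀ m < n, ∀ G' : SimpleGraph (Fin m), IsModelIn C φ G' → IsEmpty (G' ↪g G)

variable {C φ}

theorem exists_isMinimalModel_embedding {n : ℕ} {G : SimpleGraph (Fin n)}
    (hG : IsModelIn C φ G) :
    ∃ (m : ℕ) (M : SimpleGraph (Fin m)), IsMinimalModel C φ M ∧ Nonempty (M ↪g G) := by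
  induction n using Nat.strong_induction_on with
  | _ n ih =>
  by_cases hmin : ∀ m < n, ∀ G' : SimpleGraph (Fin m), IsModelIn C φ G' → IsEmpty (G' ↪g G)
  · exact ⟨n, G, ⟨hG, hmin⟩, ⟨SimpleGraph.Embedding.refl⟩⟩
  push Not at hmin
  obtain ⟨m, hmn, G', hG', ⟨f⟩⟩ := hmin
  obtain ⟨k, M, hM, ⟨g⟩⟩ := ih m hmn hG'
  exact ⟨k, M, hM, ⟨g.trans f⟩⟩

theorem IsMinimalModel.isEmpty_embedding {k m : ℕ} {G : SimpleGraph (Fin k)}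
    {M : SimpleGraph (Fin m)} (hM : IsMinimalModel C φ M) (hG : IsModelIn C φ G) (hkm : k ≠ m) :
    IsEmpty (G ↪g M) := by
  rcases hkm.lt_or_gt with hlt | hlt
  · exact hM.2 k hlt G hG
  · refine ⟨fun f => hlt.not_ge ?_⟩
    simpa using Fintype.card_le_of_embedding f.toEmbedding

theorem bddAbove_setOf_isMinimalModel
    (hwqo : ¬ ∃ Gs : ℕ → Σ V : Type, SimpleGraph V,
      (∀ i : ℕ, C (Gs i).1 (Gs i).2) ∧
      (∀ i j : ℕ, i ≠ j → IsEmpty ((Gs i).2 ↪g (Gs j).2))) :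
    BddAbove {n | ∃ G : SimpleGraph (Fin n), IsMinimalModel C φ G} := by
  by_contra hunbdd
  have hinf := Set.infinite_of_not_bddAbove hunbdd
  choose G hG using Nat.nth_mem_of_infinite hinf
  exact hwqo ⟨fun k => ⟨_, G k⟩, fun k => (hG k).1.1,
    fun i j hij => (hG j).isEmpty_embedding (hG i).1 ((Nat.nth_strictMono hinf).injective.ne hij)⟩

end MinimalModels

open SimpleGraph

theorem stmt_1_general (C : ∀ V : Type, SimpleGraph V → Prop)
    (hfin : ∀ (V : Type) (G : SimpleGraph V), C V G → Finite V)
    (hiso : ∀ (V W : Type) (G : SimpleGraph V) (H : SimpleGraph W),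
      C V G → (G ≃g H) → C W H)
    (hwqo : ¬ ∃ Gs : ℕ → Σ V : Type, SimpleGraph V,
      (∀ i : ℕ, C (Gs i).1 (Gs i).2) ∧
      (∀ i j : ℕ, i ≠ j → IsEmpty ((Gs i).2 ↪g (Gs j).2)))
    (φ : Language.graph.Sentence)
    (hpres : ∀ (V W : Type) (G : SimpleGraph V) (H : SimpleGraph W),
      C V G → C W H → (G ↪g H) → GSat G φ → GSat H φ) :
    ∃ ψ : Language.graph.Sentence, IsExistentialSentence ψ ∧
      ∀ (V : Type) (G : SimpleGraph V), C V G → (GSat G φ ↔ GSat G ψ) := by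
  by_cases htriv : ∀ (V : Type) (G : SimpleGraph V), C V G → GSat G φ
  · exact ⟨⊤, ⟨0, ⊤, .top, rfl⟩, fun V G hG => iff_of_true (htriv V G hG) (gSat_top G)⟩
  obtain ⟨N, hN⟩ := bddAbove_setOf_isMinimalModel (φ := φ) hwqo
  refine ⟨embedsSomeSentence N fun p => IsModelIn C φ p.2,
    isExistentialSentence_embedsSomeSentence, fun V G hG => ⟨fun hφ => ?_, fun hψ => ?_⟩⟩
  · have : Nonempty V := by
      by_contra hV
      rw [not_nonempty_iff] at hV
      exact htriv fun W H hH => hpres V W G H hG hH (RelEmbedding.ofIsEmpty _ _) hφ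
    have := hfin V G hG
    have := Fintype.ofFinite V
    have e := G.overFinIso rfl
    obtain ⟨m, M, hM, ⟨f⟩⟩ := exists_isMinimalModel_embedding
      ⟨hiso _ _ _ _ hG e, e.gSat_iff φ |>.1 hφ⟩
    exact gSat_embedsSomeSentence (p := ⟨⟨m, Nat.lt_succ_of_le (hN ⟨M, hM⟩)⟩, M⟩) hM.1
      (f.trans e.symm.toEmbedding)
  · obtain ⟨p, hp, ⟨f⟩⟩ := exists_embedding_of_gSat_embedsSomeSentence hψ
    exact hpres _ _ _ _ hp.1 hG f hp.2

/-- A hereditary, isomorphism-closed class of finite simple graphs that is well-quasi-ordered by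
the induced-subgraph (embedding) relation has the extension preservation property. -/
theorem stmt_1 (C : ∀ V : Type, SimpleGraph V → Prop)
    (hfin : ∀ (V : Type) (G : SimpleGraph V), C V G → Finite V)
    (hher : ∀ (V : Type) (G : SimpleGraph V) (S : Set V), C V G → C S (G.induce S))
    (hiso : ∀ (V W : Type) (G : SimpleGraph V) (H : SimpleGraph W),
      C V G → (G ≃g H) → C W H)
    (hwqo : ¬ ∃ Gs : ℕ → Σ V : Type, SimpleGraph V,
      (∀ i : ℕ, C (Gs i).1 (Gs i).2) ∧
      (∀ i j : ℕ, i ≠ j → IsEmpty ((Gs i).2 ↪g (Gs j).2)))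
    (φ : Language.graph.Sentence)
    (hpres : ∀ (V W : Type) (G : SimpleGraph V) (H : SimpleGraph W),
      C V G → C W H → (G ↪g H) → GSat G φ → GSat H φ) :
    ∃ ψ : Language.graph.Sentence, IsExistentialSentence ψ ∧
      ∀ (V : Type) (G : SimpleGraph V), C V G → (GSat G φ ↔ GSat G ψ) :=
  stmt_1_general C hfin hiso hwqo φ hpres
end

section
/- For every n ≥ 7, the graph H_n has cliquewidth at most 4. -/
/-!
Build `H_n` by adding the pairs `v_i, u_i` in order of `i` (0-based), with `a` entering together
with the first pair and `b` with the pair of index `n - 3`. A vertex whose pair has been passed is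
adjacent to exactly the `u_j` still to come, so all such vertices can share colour `0`. The current
`v_i` (with `a` or `b` if they entered with it) has colour `1`, and `u_i` has colour `2`.
The next `u` enters with colour `3` and is joined to colours `0` and `1`; after `2 → 0` the next
`v` enters with colour `2` and is joined to colours `1` and `3`; recolouring `1 → 0`, `2 → 1`,
`3 → 2` restores the invariant.
-/

open FirstOrder Language

/-- Vertex set of `H_n`: `Sum.inl (Sum.inl i)` is `v_{i+1}`, `Sum.inl (Sum.inr j)` is `u_{j+1}`,
`Sum.inr false` is `a`, and `Sum.inr true` is `b` (indices are 0-based). -/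
abbrev HVert (n : ℕ) : Type := (Fin n ⊕ Fin n) ⊕ Bool

def HnRel (n : ℕ) : HVert n → HVert n → Prop
  | Sum.inl (Sum.inl i), Sum.inl (Sum.inr j) => (i : ℕ) ≤ (j : ℕ)
  | Sum.inl (Sum.inl i), Sum.inl (Sum.inl j) => (j : ℕ) = (i : ℕ) + 1
  | Sum.inl (Sum.inr i), Sum.inl (Sum.inr j) => (i : ℕ) < (j : ℕ) ∧ (j : ℕ) ≠ (i : ℕ) + 1
  | Sum.inr false, Sum.inl (Sum.inr i) => 1 ≤ (i : ℕ)
  | Sum.inr true, Sum.inl (Sum.inr i) => n - 2 ≤ (i : ℕ)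
  | Sum.inr false, Sum.inl (Sum.inl i) => (i : ℕ) = 1
  | Sum.inr true, Sum.inl (Sum.inl i) => (i : ℕ) = n - 2
  | _, _ => False

/-- The graph `H_n` from the paper: `v_i u_j` iff `i ≤ j`; `v_i v_j` (`i < j`) iff `j = i + 1`;
`u_i u_j` (`i < j`) iff `j ≠ i + 1`; `a u_i` for `i ≥ 2`; `b u_i` for `i ≥ n - 1`;
`a v_2`; `b v_{n-1}` (stated with 1-based indices). -/
def Hgraph (n : ℕ) : SimpleGraph (HVert n) := SimpleGraph.fromRel (HnRel n)

/-- `CliqueExpr k V G c` means the `k`-colored graph `(G, c)` is constructible using the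
cliquewidth operations: creating a single colored vertex, disjoint union, adding all edges
between two distinct color classes, and recoloring. -/
inductive CliqueExpr (k : ℕ) : (V : Type) → SimpleGraph V → (V → Fin k) → Prop
  | single (c : Fin k) : CliqueExpr k PUnit ⊥ (fun _ => c)
  | union {V W : Type} {G : SimpleGraph V} {H : SimpleGraph W} {cG : V → Fin k} {cH : W → Fin k} :
      CliqueExpr k V G cG → CliqueExpr k W H cH →
      CliqueExpr k (V ⊕ W) (G ⊕g H) (Sum.elim cG cH)
  | addEdges {V : Type} {G : SimpleGraph V} {c : V → Fin k} (i j : Fin k) (hij : i ≠ j) :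
      CliqueExpr k V G c →
      CliqueExpr k V (G ⊔ SimpleGraph.fromRel (fun x y => c x = i ∧ c y = j)) c
  | recolor {V : Type} {G : SimpleGraph V} {c : V → Fin k} (i j : Fin k) :
      CliqueExpr k V G c → CliqueExpr k V G (fun v => if c v = i then j else c v)

/-- `G` has cliquewidth at most `k`: it is isomorphic to the underlying graph of a
constructible `k`-colored graph. -/
def CliquewidthLE {V : Type} (G : SimpleGraph V) (k : ℕ) : Prop :=
  ∃ (W : Type) (H : SimpleGraph W) (c : W → Fin k), CliqueExpr k W H c ∧ Nonempty (G ≃g H)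


def HasKExpression (k : ℕ) {V : Type} (G : SimpleGraph V) (c : V → Fin k) : Prop :=
  ∃ (W : Type) (H : SimpleGraph W) (d : W → Fin k), CliqueExpr k W H d ∧
    ∃ e : G ≃g H, ∀ v, d (e v) = c v

namespace HasKExpression

variable {k : ℕ} {V W : Type} {G : SimpleGraph V} {c : V → Fin k}

theorem of_iso {G' : SimpleGraph W} {c' : W → Fin k} (h : HasKExpression k G c) (e : G ≃g G')
    (hc : ∀ v, c' (e v) = c v) : HasKExpression k G' c' := by
  obtain ⟨U, H, d, hH, f, hf⟩ := h
  refine ⟨U, H, d, hH, e.symm.trans f, fun w => ?_⟩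
  calc d (f (e.symm w)) = c (e.symm w) := hf _
    _ = c' w := by rw [← hc, e.apply_symm_apply]

theorem cliquewidthLE (h : HasKExpression k G c) : CliquewidthLE G k :=
  let ⟨U, H, d, hH, e, _⟩ := h
  ⟨U, H, d, hH, ⟨e⟩⟩

theorem recolor (h : HasKExpression k G c) (i j : Fin k) :
    HasKExpression k G (fun v => if c v = i then j else c v) := by
  obtain ⟨U, H, d, hH, e, he⟩ := h
  exact ⟨U, H, _, hH.recolor i j, e, fun v => by simp [he]⟩

theorem addEdges (h : HasKExpression k G c) {i j : Fin k} (hij : i ≠ j) :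
    HasKExpression k (G ⊔ SimpleGraph.fromRel (fun x y => c x = i ∧ c y = j)) c := by
  obtain ⟨U, H, d, hH, e, he⟩ := h
  refine ⟨U, _, d, hH.addEdges i j hij, ⟨e.toEquiv, ?_⟩, he⟩
  intro x y
  simp only [SimpleGraph.sup_adj, SimpleGraph.fromRel_adj, RelIso.coe_fn_toEquiv,
    e.map_adj_iff, he, ne_eq, e.apply_eq_iff_eq]

theorem addEdges_finset (h : HasKExpression k G c) (i : Fin k) (S : Finset (Fin k))
    (hi : i ∉ S) :
    HasKExpression k (G ⊔ SimpleGraph.fromRel (fun x y => c x = i ∧ c y ∈ S)) c := by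
  induction S using Finset.induction_on with
  | empty =>
    convert h
    ext x y
    simp
  | insert j S hjS ih =>
    rw [Finset.mem_insert, not_or] at hi
    convert (ih hi.2).addEdges (Ne.symm hi.1).symm using 1
    ext x y
    simp only [SimpleGraph.sup_adj, SimpleGraph.fromRel_adj, Finset.mem_insert]
    tauto

theorem union_single (h : HasKExpression k G c) (i : Fin k) :
    HasKExpression k (G ⊕g (⊥ : SimpleGraph PUnit)) (Sum.elim c fun _ => i) := by
  obtain ⟨U, H, d, hH, e, he⟩ := h
  refine ⟨U ⊕ PUnit, H ⊕g ⊥, Sum.elim d fun _ => i, hH.union (CliqueExpr.single i),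
    ⟨Equiv.sumCongr e.toEquiv (Equiv.refl _), ?_⟩, ?_⟩
  · rintro (x | x) (y | y) <;> simp [e.map_adj_iff]
  · rintro (x | x) <;> simp [he]

end HasKExpression

def HasKExpressionOn (k : ℕ) {V : Type} (G : SimpleGraph V) (s : Set V) (c : V → Fin k) :
    Prop :=
  HasKExpression k (G.induce s) (fun v => c v)

namespace HasKExpressionOn

variable {k : ℕ} {V : Type} {G : SimpleGraph V} {s t : Set V} {c c' : V → Fin k}

theorem singleton (x : V) (c : V → Fin k) : HasKExpressionOn k G {x} c := by
  refine ⟨PUnit, ⊥, fun _ => c x, CliqueExpr.single (c x),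
    ⟨Equiv.Set.singleton x, fun {y z} => ?_⟩, ?_⟩
  · simp only [SimpleGraph.bot_adj, false_iff]
    rw [Subsingleton.elim y z]
    exact (G.induce {x}).irrefl
  · rintro ⟨y, rfl⟩
    rfl

theorem insert [DecidableEq V] (h : HasKExpressionOn k G s c) {x : V} (hx : x ∉ s)
    {d : Fin k} {S : Finset (Fin k)} (hdS : d ∉ S) (hd : S.Nonempty → ∀ y ∈ s, c y ≠ d)
    (hadj : ∀ y ∈ s, G.Adj x y ↔ c y ∈ S) :
    HasKExpressionOn k G (insert x s) (Function.update c x d) := by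
  classical
  refine ((HasKExpression.union_single h d).addEdges_finset d S hdS).of_iso
    ⟨(Equiv.Set.insert hx).symm, fun {y z} => ?_⟩ ?_
  · rcases y with y | ⟨⟩ <;> rcases z with z | ⟨⟩ <;> simp [hdS]
    · rintro - (⟨hy, hz⟩ | ⟨hz, hy⟩)
      · exact absurd hy (hd ⟨_, hz⟩ y y.2)
      · exact absurd hz (hd ⟨_, hy⟩ z z.2)
    · rw [G.adj_comm, hadj y y.2]
    · exact hadj z z.2
  · rintro (y | ⟨⟩)
    · exact Function.update_of_ne (ne_of_mem_of_not_mem y.2 hx) d c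
    · exact Function.update_self x d c

theorem recolor (h : HasKExpressionOn k G s c) (i j : Fin k) :
    HasKExpressionOn k G s (fun v => if c v = i then j else c v) :=
  HasKExpression.recolor h i j

theorem congr (h : HasKExpressionOn k G s c) (hst : s = t) (hc : ∀ v ∈ t, c v = c' v) :
    HasKExpressionOn k G t c' := by
  subst hst
  exact HasKExpression.of_iso h SimpleGraph.Iso.refl fun v => (hc v v.2).symm

theorem cliquewidthLE (h : HasKExpressionOn k G Set.univ c) : CliquewidthLE G k :=
  (HasKExpression.of_iso h G.induceUnivIso fun _ => rfl).cliquewidthLE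

end HasKExpressionOn

namespace Hgraph

variable {n : ℕ}

def stageOf : HVert n → ℕ
  | Sum.inl (Sum.inl i) => i
  | Sum.inl (Sum.inr i) => i
  | Sum.inr false => 0
  | Sum.inr true => n - 3

def stage (n s : ℕ) : Set (HVert n) := {x | stageOf x ≤ s}

def tipColor : HVert n → Fin 4
  | Sum.inl (Sum.inr _) => 2
  | _ => 1

def stageColor (n s : ℕ) (x : HVert n) : Fin 4 := if stageOf x = s then tipColor x else 0

def shiftedColor (n s : ℕ) (x : HVert n) : Fin 4 := if stageOf x = s then tipColor x + 1 else 0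

theorem _root_.HasKExpressionOn.of_shiftedColor {G : SimpleGraph (HVert n)} {t : Set (HVert n)} {s : ℕ}
    (h : HasKExpressionOn 4 G t (shiftedColor n s)) : HasKExpressionOn 4 G t (stageColor n s) :=
  ((h.recolor 2 1).recolor 3 2).congr rfl fun x _ => by
    rcases x with (_ | _) | (_ | _) <;> simp [shiftedColor, stageColor, tipColor] <;> grind

theorem stage_zero (hn : 4 ≤ n) : HasKExpressionOn 4 (Hgraph n) (stage n 0) (stageColor n 0) := by
  have h0 : 0 < n := by omega
  refine (((HasKExpressionOn.singleton (Sum.inl (Sum.inl ⟨0, h0⟩)) (stageColor n 0)).insert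
      (x := Sum.inl (Sum.inr ⟨0, h0⟩)) (d := 2) (S := {1}) ?_ (by decide) ?_ ?_).insert
      (x := Sum.inr false) (d := 1) (S := ∅) ?_ (by decide) (by simp) ?_).congr ?_ ?_
  all_goals simp [Sum.forall, Set.ext_iff, stage, Hgraph, HnRel, stageColor, stageOf, tipColor,
    Function.update_apply]
  all_goals grind

theorem stage_insert_u_v (hn : 3 ≤ n) {s : ℕ} (hs : s + 1 < n)
    (h : HasKExpressionOn 4 (Hgraph n) (stage n s) (stageColor n s)) :
    HasKExpressionOn 4 (Hgraph n)
      (insert (Sum.inl (Sum.inl ⟨s + 1, hs⟩)) (insert (Sum.inl (Sum.inr ⟨s + 1, hs⟩)) (stage n s)))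
      (shiftedColor n (s + 1)) := by
  refine ((((h.insert (x := Sum.inl (Sum.inr ⟨s + 1, hs⟩)) (d := 3) (S := {0, 1})
      ?_ (by decide) ?_ ?_).recolor 2 0).insert (x := Sum.inl (Sum.inl ⟨s + 1, hs⟩)) (d := 2)
      (S := {1, 3}) ?_ (by decide) ?_ ?_).recolor 1 0).congr rfl ?_
  -- what is left is checked vertex by vertex: the new vertices are not yet present, their
  -- neighbourhoods are the announced colour classes, and the colours come out as claimed
  all_goals simp [Sum.forall, stage, Hgraph, HnRel, stageColor, shiftedColor, stageOf, tipColor,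
    Function.update_apply]
  all_goals grind

theorem stage_succ (hn : 3 ≤ n) {s : ℕ} (hs : s + 1 < n)
    (h : HasKExpressionOn 4 (Hgraph n) (stage n s) (stageColor n s)) :
    HasKExpressionOn 4 (Hgraph n) (stage n (s + 1)) (stageColor n (s + 1)) := by
  have huv := stage_insert_u_v hn hs h
  by_cases hb : s + 1 = n - 3
  · have huvb := huv.insert (x := Sum.inr true) (d := 2) (S := ∅) ?_ (by decide) (by simp) ?_
    refine ((huvb.congr rfl ?_).of_shiftedColor).congr ?_ fun _ _ => rfl
    all_goals simp [Sum.forall, Set.ext_iff, stage, Hgraph, HnRel, shiftedColor, stageOf, tipColor,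
      Function.update_apply]
    all_goals grind
  · refine huv.of_shiftedColor.congr ?_ fun _ _ => rfl
    simp [Sum.forall, Set.ext_iff, stage, stageOf]
    grind

theorem stage_eq_univ : stage n (n - 1) = Set.univ := by
  simp [Set.eq_univ_iff_forall, Sum.forall, stage, stageOf]
  grind

end Hgraph

/-- For every `n ≥ 7`, the graph `H_n` has cliquewidth at most `4`. -/
theorem stmt_6 (n : ℕ) (hn : 7 ≤ n) : CliquewidthLE (Hgraph n) 4 := by
  have key : ∀ s < n, HasKExpressionOn 4 (Hgraph n) (Hgraph.stage n s) (Hgraph.stageColor n s) := by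
    intro s hs
    induction s with
    | zero => exact Hgraph.stage_zero (by omega)
    | succ s ih => exact Hgraph.stage_succ (by omega) hs (ih (by omega))
  have := key (n - 1) (by omega)
  rw [Hgraph.stage_eq_univ] at this
  exact this.cliquewidthLE
end

section
/- Let G be a finite simple graph, let p, d, n ∈ ℕ, and let t : V(G) → {1,…,p} be any coloring of the vertices. Then there exist a radius e ≤ 2dp and a set D ⊆ V(G) with |D| ≤ (n−1)p such that for every color i ∈ {1,…,p}, either (a) every vertex v with t(v) = i satisfies N_d(v) ⊆ N_e(D) (the color i is covered by N_e(D)), or (b) there exists a set S of n vertices of color i, pairwise at distance greater than 2d in G, such that N_d(v) ∩ N_e(D) = ∅ for every v ∈ S (the color i is n-free over N_e(D)). -/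
/-! Grow a set `D` of centres in rounds, keeping a radius `c` such that every vertex of a
finished colour lies within `c` of `D`. In a round, consider for each unfinished colour its
vertices farther than `c + 2d` from `D`. If for every unfinished colour these contain `n` points
pairwise farther than `2d` apart, stop with `e = c + d`: those colours are `n`-free and the
finished ones are covered. Otherwise some colour has a maximal `2d`-scattered set `S` of fewer
than `n` such vertices; by maximality `S` dominates them within `2d`, so adding `S` to `D` and
`2d` to `c` finishes that colour. A round costs at most `n - 1` centres and `2d` of radius, and
once every colour is finished, all vertices lie within `c ≤ 2dp` of `D`. -/

open FirstOrder Language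

/-- The ball `N_r(v)`: vertices reachable from `v` by a walk of length at most `r`. -/
def gball {V : Type} (G : SimpleGraph V) (r : ℕ) (v : V) : Set V :=
  {u | ∃ w : G.Walk v u, w.length ≤ r}

/-- `N_r(D)` for a finite set `D` of vertices. -/
def gballSet {V : Type} (G : SimpleGraph V) (r : ℕ) (D : Finset V) : Set V :=
  ⋃ v ∈ D, gball G r v

open SimpleGraph Finset

variable {V : Type} {G : SimpleGraph V}

lemma mem_gball_iff {r : ℕ} {v u : V} : u ∈ gball G r v ↔ G.edist v u ≤ r := by
  refine ⟨fun ⟨w, hw⟩ => (edist_le w).trans (by exact_mod_cast hw), fun h => ?_⟩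
  obtain ⟨w, hw⟩ := exists_walk_of_edist_ne_top (ne_top_of_le_ne_top (ENat.natCast_ne_top r) h)
  exact ⟨w, by rw [← hw] at h; exact_mod_cast h⟩

lemma mem_gballSet_iff {r : ℕ} {D : Finset V} {x : V} :
    x ∈ gballSet G r D ↔ ∃ u ∈ D, G.edist u x ≤ r := by
  simp only [gballSet, Set.mem_iUnion, mem_gball_iff, exists_prop]

lemma forall_lt_walk_length_iff {k : ℕ} {a b : V} :
    (∀ w : G.Walk a b, k < w.length) ↔ (k : ℕ∞) < G.edist a b := by
  refine ⟨fun h => lt_of_not_ge fun hle => ?_, fun h w => by exact_mod_cast h.trans_le (edist_le w)⟩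
  obtain ⟨w, hw⟩ := exists_walk_of_edist_ne_top (ne_top_of_le_ne_top (ENat.natCast_ne_top k) hle)
  rw [← hw] at hle
  exact (h w).not_ge (by exact_mod_cast hle)

lemma edist_le_add_of_le {a b : ℕ} {u v w : V} (huv : G.edist u v ≤ a) (hvw : G.edist v w ≤ b) :
    G.edist u w ≤ (a + b : ℕ) := by
  push_cast
  exact G.edist_triangle.trans (add_le_add huv hvw)

lemma gball_subset_gballSet {c d : ℕ} {D : Finset V} {v : V} (h : ∃ u ∈ D, G.edist u v ≤ c) :
    gball G d v ⊆ gballSet G (c + d) D := by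
  obtain ⟨u, hu, huv⟩ := h
  intro x hx
  exact mem_gballSet_iff.2 ⟨u, hu, edist_le_add_of_le huv (mem_gball_iff.1 hx)⟩

lemma gball_inter_gballSet_eq_empty {e d : ℕ} {D : Finset V} {v : V}
    (h : ∀ u ∈ D, ((e + d : ℕ) : ℕ∞) < G.edist u v) : gball G d v ∩ gballSet G e D = ∅ := by
  refine Set.eq_empty_of_forall_notMem fun x ⟨hvx, hDx⟩ => ?_
  obtain ⟨u, hu, hux⟩ := mem_gballSet_iff.1 hDx
  rw [mem_gball_iff, G.edist_comm] at hvx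
  exact (h u hu).not_ge (edist_le_add_of_le hux hvx)

lemma exists_pairwise_far_or_dominating (X : Set V) (r : ℕ) :
    ∀ n : ℕ, (∃ S : Finset V, #S = n ∧ ↑S ⊆ X ∧ (S : Set V).Pairwise fun a b => r < G.edist a b) ∨
      ∃ S : Finset V, #S < n ∧ ↑S ⊆ X ∧ ∀ x ∈ X, ∃ s ∈ S, G.edist s x ≤ r
  | 0 => .inl ⟨∅, by simp⟩
  | n + 1 => by
    classical
    obtain ⟨S, hcard, hSX, hfar⟩ | ⟨S, hcard, hSX, hdom⟩ := exists_pairwise_far_or_dominating X r n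
    · by_cases hdom : ∀ x ∈ X, ∃ s ∈ S, G.edist s x ≤ r
      · exact .inr ⟨S, by omega, hSX, hdom⟩
      push Not at hdom
      obtain ⟨x, hxX, hxfar⟩ := hdom
      have hxS : x ∉ S := fun hx => by simpa using hxfar x hx
      refine .inl ⟨insert x S, by rw [card_insert_of_notMem hxS, hcard], ?_, ?_⟩
      · exact coe_insert x S ▸ Set.insert_subset hxX hSX
      · exact coe_insert x S ▸ hfar.insert fun s hs _ => ⟨G.edist_comm ▸ hxfar s hs, hxfar s hs⟩
    · exact .inr ⟨S, by omega, hSX, hdom⟩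

variable {ι : Type*}

def CoveredOrFree (G : SimpleGraph V) (t : V → ι) (d n e : ℕ) (D : Finset V) (i : ι) : Prop :=
  (∀ v : V, t v = i → gball G d v ⊆ gballSet G e D) ∨
    ∃ S : Finset V, #S = n ∧ (∀ v ∈ S, t v = i) ∧
      (∀ a ∈ S, ∀ b ∈ S, a ≠ b → ∀ w : G.Walk a b, 2 * d < w.length) ∧
      ∀ v ∈ S, gball G d v ∩ gballSet G e D = ∅

section CoveredOrFree

variable {t : V → ι} {d n e : ℕ} {D : Finset V} {i : ι}

lemma coveredOrFree_of_forall_near (h : ∀ x, ∃ u ∈ D, G.edist u x ≤ e) :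
    CoveredOrFree G t d n e D i :=
  .inl fun _ _ x _ => mem_gballSet_iff.2 (h x)

lemma coveredOrFree_of_forall_color_near {c : ℕ} (h : ∀ v, t v = i → ∃ u ∈ D, G.edist u v ≤ c) :
    CoveredOrFree G t d n (c + d) D i :=
  .inl fun v hv => gball_subset_gballSet (h v hv)

lemma coveredOrFree_of_far {S : Finset V} (hcard : #S = n) (hcolor : ∀ v ∈ S, t v = i)
    (hscattered : (S : Set V).Pairwise fun a b => (2 * d : ℕ) < G.edist a b)
    (hfar : ∀ v ∈ S, ∀ u ∈ D, ((e + d : ℕ) : ℕ∞) < G.edist u v) :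
    CoveredOrFree G t d n e D i :=
  .inr ⟨S, hcard, hcolor, fun _ ha _ hb hab => forall_lt_walk_length_iff.2 (hscattered ha hb hab),
    fun v hv => gball_inter_gballSet_eq_empty (hfar v hv)⟩

end CoveredOrFree

lemma exists_near_union_of_dominating [DecidableEq V] {D S : Finset V} {c r : ℕ} {v : V}
    (hdom : (∀ u ∈ D, ((c + r : ℕ) : ℕ∞) < G.edist u v) → ∃ s ∈ S, G.edist s v ≤ r) :
    ∃ u ∈ D ∪ S, G.edist u v ≤ (c + r : ℕ) := by
  by_cases hnear : ∃ u ∈ D, G.edist u v ≤ (c + r : ℕ)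
  · obtain ⟨u, hu, huv⟩ := hnear
    exact ⟨u, mem_union_left S hu, huv⟩
  push Not at hnear
  obtain ⟨s, hs, hsv⟩ := hdom hnear
  exact ⟨s, mem_union_right D hs, hsv.trans (by gcongr; omega)⟩

theorem exists_coveredOrFree (t : V → ι) (d n : ℕ) (U : Finset ι) :
    ∀ (D : Finset V) (c : ℕ), (∀ v, t v ∉ U → ∃ u ∈ D, G.edist u v ≤ c) →
      ∃ e D', e ≤ c + 2 * d * #U ∧ #D' ≤ #D + (n - 1) * #U ∧
        ∀ i, CoveredOrFree G t d n e D' i := by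
  induction U using Finset.strongInduction with | H U ih => ?_
  intro D c hcov
  classical
  rcases U.eq_empty_or_nonempty with rfl | hU
  · exact ⟨c, D, by simp, by simp, fun i => coveredOrFree_of_forall_near fun x => hcov x (by simp)⟩
  set far : ι → Set V := fun i => {v | t v = i ∧ ∀ u ∈ D, ((c + 2 * d : ℕ) : ℕ∞) < G.edist u v}
  by_cases hfree : ∀ i ∈ U, ∃ S : Finset V, #S = n ∧ ↑S ⊆ far i ∧
      (S : Set V).Pairwise fun a b => (2 * d : ℕ) < G.edist a b
  · refine ⟨c + d, D, ?_, by simp, fun i => ?_⟩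
    · nlinarith [hU.card_pos]
    by_cases hi : i ∈ U
    · obtain ⟨S, hcard, hSfar, hS⟩ := hfree i hi
      refine coveredOrFree_of_far hcard (fun v hv => (hSfar hv).1) hS fun v hv => ?_
      simpa only [show c + d + d = c + 2 * d by ring] using (hSfar hv).2
    · exact coveredOrFree_of_forall_color_near fun v hv => hcov v (hv ▸ hi)
  push Not at hfree
  obtain ⟨i, hi, hnot⟩ := hfree
  obtain ⟨S, hS, -, hdom⟩ := (exists_pairwise_far_or_dominating (far i) (2 * d) n).resolve_left
    fun ⟨S, hcard, hSfar, hscattered⟩ => hnot S hcard hSfar hscattered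
  have hcov' : ∀ v, t v ∉ U.erase i → ∃ u ∈ D ∪ S, G.edist u v ≤ (c + 2 * d : ℕ) := by
    intro v hv
    by_cases hvi : t v = i
    · exact exists_near_union_of_dominating fun hfar => hdom v ⟨hvi, hfar⟩
    · obtain ⟨u, hu, huv⟩ := hcov v fun hvU => hv (mem_erase.2 ⟨hvi, hvU⟩)
      exact ⟨u, mem_union_left S hu, huv.trans (by gcongr; omega)⟩
  obtain ⟨e, D', he, hD', hgoal⟩ := ih (U.erase i) (erase_ssubset hi) (D ∪ S) (c + 2 * d) hcov'
  refine ⟨e, D', ?_, ?_, hgoal⟩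
  · rw [← card_erase_add_one hi]
    linarith
  · have hDS : #(D ∪ S) ≤ #D + (n - 1) := (card_union_le D S).trans (by omega)
    rw [← card_erase_add_one hi, mul_add_one]
    linarith

theorem stmt_12_general (V : Type) (G : SimpleGraph V) (p d n : ℕ) (t : V → Fin p) :
    ∃ (e : ℕ) (D : Finset V), e ≤ 2 * d * p ∧ D.card ≤ (n - 1) * p ∧
      ∀ i : Fin p,
        (∀ v : V, t v = i → gball G d v ⊆ gballSet G e D) ∨
        (∃ S : Finset V, S.card = n ∧ (∀ v ∈ S, t v = i) ∧
          (∀ a ∈ S, ∀ b ∈ S, a ≠ b → ∀ w : G.Walk a b, 2 * d < w.length) ∧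
          (∀ v ∈ S, gball G d v ∩ gballSet G e D = ∅)) := by
  obtain ⟨e, D, he, hD, hcf⟩ := exists_coveredOrFree (G := G) t d n univ ∅ 0 (by simp)
  exact ⟨e, D, by simpa using he, by simpa using hD, hcf⟩

/-- For any coloring of the vertices of a finite graph with `p` colors, there are a radius
`e ≤ 2dp` and a set `D` of at most `(n-1)p` vertices such that every color is either covered
by `N_e(D)` or `n`-free over `N_e(D)`. -/
theorem stmt_12 (V : Type) [Fintype V] (G : SimpleGraph V) (p d n : ℕ) (t : V → Fin p) :
    ∃ (e : ℕ) (D : Finset V), e ≤ 2 * d * p ∧ D.card ≤ (n - 1) * p ∧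
      ∀ i : Fin p,
        (∀ v : V, t v = i → gball G d v ⊆ gballSet G e D) ∨
        (∃ S : Finset V, S.card = n ∧ (∀ v ∈ S, t v = i) ∧
          (∀ a ∈ S, ∀ b ∈ S, a ≠ b → ∀ w : G.Walk a b, 2 * d < w.length) ∧
          (∀ v ∈ S, gball G d v ∩ gballSet G e D = ∅)) :=
  stmt_12_general V G p d n t
end
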